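/- arXiv:1510.04053 — 6 statements merged into one kernel-verified Lean document; each statement's English description precedes it below -/
import Mathlib

section
/- Let c1, c2, c3 be points of the Euclidean plane that are affinely independent, and let r1, r2, r3 ≥ 0 be radii such that the corresponding closed disks are pairwise disjoint, i.e. dist(ci, cj) > ri + rj for all i ≠ j. Then there exists a unique pair (p, ρ) with p a point of the plane and ρ > 0 such that dist(p, ci)^2 = ρ^2 + ri^2 for i = 1, 2, 3; that is, there is a unique circle orthogonal to all three given circles (where a circle of radius 0 is a point and orthogonality to it means passing through it). -/
/-!
The center `p` of a circle orthogonal to all three given circles is a point whose power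
`dist p cᵢ ^ 2 - rᵢ ^ 2` with respect to every circle is the same number `ρ ^ 2`. Differences
of powers are affine in `p` with linear parts `⟪cᵢ - cⱼ, ·⟫`, so when the centers form an
affine basis there is exactly one such point, the radical center. Its common power is
positive: a point of nonpositive power with respect to two circles lies in both of their
closed disks, which are disjoint.
-/

open scoped RealInnerProductSpace

variable {V P : Type*} [NormedAddCommGroup V] [InnerProductSpace ℝ V]

theorem Module.Basis.existsUnique_inner_eq [FiniteDimensional ℝ V] {ι : Type*}
    (b : Module.Basis ι ℝ V) (t : ι → ℝ) : ∃! v : V, ∀ i, ⟪b i, v⟫ = t i := by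
  let v := (InnerProductSpace.toDual ℝ V).symm (b.constr ℝ t).toContinuousLinearMap
  have hv (i : ι) : ⟪b i, v⟫ = t i := by
    rw [real_inner_comm, InnerProductSpace.toDual_symm_apply]
    exact b.constr_basis ℝ t i
  exact ⟨v, hv, fun w hw ↦
    InnerProductSpace.ext_inner_left_basis b fun i ↦ (hw i).trans (hv i).symm⟩

variable [MetricSpace P] [NormedAddTorsor V P]

namespace EuclideanGeometry

theorem Sphere.power_sub_power (s₀ s : Sphere P) (p : P) :
    s.power p - s₀.power p = ‖s.center -ᵥ s₀.center‖ ^ 2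
      - 2 * ⟪s.center -ᵥ s₀.center, p -ᵥ s₀.center⟫ - s.radius ^ 2 + s₀.radius ^ 2 := by
  simp only [Sphere.power, dist_eq_norm_vsub V,
    ← vsub_sub_vsub_cancel_right p s.center s₀.center, norm_sub_sq_real, real_inner_comm]
  ring

theorem Sphere.power_pos_of_power_eq {s₁ s₂ : Sphere P} {p : P} (hr₁ : 0 ≤ s₁.radius)
    (hr₂ : 0 ≤ s₂.radius) (hdisj : s₁.radius + s₂.radius < dist s₁.center s₂.center)
    (hp : s₁.power p = s₂.power p) : 0 < s₁.power p := by
  by_contra! hle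
  have h₁ := (Sphere.power_nonpos_iff_dist_center_le_radius hr₁).mp hle
  have h₂ := (Sphere.power_nonpos_iff_dist_center_le_radius hr₂).mp (hp ▸ hle)
  linarith [dist_triangle_left s₁.center s₂.center p]

end EuclideanGeometry

open EuclideanGeometry

theorem AffineBasis.existsUnique_forall_power_eq [FiniteDimensional ℝ V] {ι : Type*}
    (b : AffineBasis ι ℝ P) (r : ι → ℝ) :
    ∃! p : P, ∃ k : ℝ, ∀ i, (⟨b i, r i⟩ : Sphere P).power p = k := by
  obtain ⟨i₀⟩ := b.nonempty
  let t (j : {j // j ≠ i₀}) : ℝ := (‖b j -ᵥ b i₀‖ ^ 2 - r j ^ 2 + r i₀ ^ 2) / 2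
  have key (v : V) : (∃ k : ℝ, ∀ i, (⟨b i, r i⟩ : Sphere P).power (v +ᵥ b i₀) = k) ↔
      ∀ j, ⟪b.basisOf i₀ j, v⟫ = t j := by
    simp only [b.basisOf_apply]
    constructor
    · rintro ⟨k, hk⟩ j
      have := Sphere.power_sub_power ⟨b i₀, r i₀⟩ ⟨b j, r j⟩ (v +ᵥ b i₀)
      rw [hk, hk] at this
      simp only [vadd_vsub] at this
      simp only [t]
      linarith
    · intro hv
      refine ⟨(⟨b i₀, r i₀⟩ : Sphere P).power (v +ᵥ b i₀), fun i ↦ ?_⟩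
      by_cases hi : i = i₀
      · rw [hi]
      · rw [← sub_eq_zero, Sphere.power_sub_power]
        simp only [vadd_vsub, hv ⟨i, hi⟩, t]
        ring
  rw [← (Equiv.vaddConst (b i₀)).existsUnique_congr_right]
  simpa only [Equiv.coe_vaddConst, key] using (b.basisOf i₀).existsUnique_inner_eq t

theorem unique_orthogonal_circle_general
    (c₁ c₂ c₃ : EuclideanSpace ℝ (Fin 2))
    (r₁ r₂ r₃ : ℝ)
    (hind : AffineIndependent ℝ ![c₁, c₂, c₃])
    (hr₁ : 0 ≤ r₁) (hr₂ : 0 ≤ r₂)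
    (h₁₂ : dist c₁ c₂ > r₁ + r₂) :
    ∃! pρ : EuclideanSpace ℝ (Fin 2) × ℝ,
      0 < pρ.2 ∧
      dist pρ.1 c₁ ^ 2 = pρ.2 ^ 2 + r₁ ^ 2 ∧
      dist pρ.1 c₂ ^ 2 = pρ.2 ^ 2 + r₂ ^ 2 ∧
      dist pρ.1 c₃ ^ 2 = pρ.2 ^ 2 + r₃ ^ 2 := by
  let b : AffineBasis (Fin 3) ℝ (EuclideanSpace ℝ (Fin 2)) :=
    ⟨![c₁, c₂, c₃], hind, hind.affineSpan_eq_top_iff_card_eq_finrank_add_one.mpr (by simp)⟩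
  have hb : ⇑b = ![c₁, c₂, c₃] := rfl
  obtain ⟨p, ⟨k, hk⟩, hp_unique⟩ := b.existsUnique_forall_power_eq ![r₁, r₂, r₃]
  have hk_pos : 0 < k :=
    (Sphere.power_pos_of_power_eq hr₁ hr₂ h₁₂ ((hk 0).trans (hk 1).symm)).trans_eq (hk 0)
  have h₁ : dist p c₁ ^ 2 - r₁ ^ 2 = k := hk 0
  have h₂ : dist p c₂ ^ 2 - r₂ ^ 2 = k := hk 1
  have h₃ : dist p c₃ ^ 2 - r₃ ^ 2 = k := hk 2
  refine ⟨(p, √k), ⟨Real.sqrt_pos.mpr hk_pos, ?_⟩, ?_⟩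
  · simp only [Real.sq_sqrt hk_pos.le]
    refine ⟨?_, ?_, ?_⟩ <;> linarith
  · rintro ⟨q, σ⟩ ⟨hσ, hq₁, hq₂, hq₃⟩
    dsimp only at hσ hq₁ hq₂ hq₃
    obtain rfl : q = p := hp_unique q ⟨σ ^ 2, fun i ↦ by
      fin_cases i <;> simp [Sphere.power, hb] <;> linarith⟩
    have hσ_sq : σ ^ 2 = k := by linarith
    rw [← hσ_sq, Real.sqrt_sq hσ.le]

/-- Three pairwise disjoint circles (possibly degenerate) with affinely
independent centers in the Euclidean plane admit a unique common orthogonal circle. -/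
theorem unique_orthogonal_circle
    (c₁ c₂ c₃ : EuclideanSpace ℝ (Fin 2))
    (r₁ r₂ r₃ : ℝ)
    (hind : AffineIndependent ℝ ![c₁, c₂, c₃])
    (hr₁ : 0 ≤ r₁) (hr₂ : 0 ≤ r₂) (hr₃ : 0 ≤ r₃)
    (h₁₂ : dist c₁ c₂ > r₁ + r₂)
    (h₂₃ : dist c₂ c₃ > r₂ + r₃)
    (h₃₁ : dist c₃ c₁ > r₃ + r₁) :
    ∃! pρ : EuclideanSpace ℝ (Fin 2) × ℝ,
      0 < pρ.2 ∧
      dist pρ.1 c₁ ^ 2 = pρ.2 ^ 2 + r₁ ^ 2 ∧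
      dist pρ.1 c₂ ^ 2 = pρ.2 ^ 2 + r₂ ^ 2 ∧
      dist pρ.1 c₃ ^ 2 = pρ.2 ^ 2 + r₃ ^ 2 :=
  unique_orthogonal_circle_general c₁ c₂ c₃ r₁ r₂ r₃ hind hr₁ hr₂ h₁₂
end

section
/- For every b > 0 and a ∈ ℝ one has (cosh b + exp a)/sinh b > cosh b / sinh b > 1. Define r > 0 by sinh r · sinh b = 1 and l > 0 by cosh l = (cosh b + exp a)/sinh b. Then l > r, and moreover the map (b, a) ↦ (r, l) is a bijection from (0, ∞) × ℝ onto { (r, l) ∈ ℝ × ℝ : 0 < r < l }. -/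
/-!
The relation `sinh r * sinh b = 1` is symmetric in `r` and `b` and forces
`cosh r * sinh b = cosh b`. Hence `cosh r = cosh b / sinh b < cosh l`, which gives `r < l`.
Read backwards, the same relations give `exp a = (cosh l - cosh r) / sinh r`, so
`(r, l) ↦ (arsinh (1 / sinh r), log ((cosh l - cosh r) / sinh r))` is an explicit inverse.
-/

noncomputable def arcosh (x : ℝ) : ℝ := Real.log (x + Real.sqrt (x ^ 2 - 1))

lemma arcosh_eq_real_arcosh : arcosh = Real.arcosh := rfl

section

open Real

lemma lt_of_cosh_lt_cosh {r l : ℝ} (hl : 0 ≤ l) (h : cosh r < cosh l) : r < l :=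
  calc r ≤ |r| := le_abs_self r
    _ < |l| := cosh_lt_cosh.mp h
    _ = l := abs_of_nonneg hl

lemma one_lt_cosh_div_sinh {b : ℝ} (hb : 0 < b) : 1 < cosh b / sinh b :=
  (one_lt_div (sinh_pos_iff.mpr hb)).mpr (sinh_lt_cosh b)

lemma cosh_div_sinh_lt_add_exp_div_sinh {b : ℝ} (hb : 0 < b) (a : ℝ) :
    cosh b / sinh b < (cosh b + exp a) / sinh b :=
  div_lt_div_of_pos_right (by linarith [exp_pos a]) (sinh_pos_iff.mpr hb)

lemma one_lt_add_exp_div_sinh {b : ℝ} (hb : 0 < b) (a : ℝ) : 1 < (cosh b + exp a) / sinh b :=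
  (one_lt_cosh_div_sinh hb).trans (cosh_div_sinh_lt_add_exp_div_sinh hb a)

lemma sinh_arsinh_one_div_sinh_mul_sinh {b : ℝ} (hb : 0 < b) :
    sinh (arsinh (1 / sinh b)) * sinh b = 1 := by
  rw [sinh_arsinh, one_div_mul_cancel (sinh_pos_iff.mpr hb).ne']

lemma arsinh_one_div_sinh_pos {b : ℝ} (hb : 0 < b) : 0 < arsinh (1 / sinh b) :=
  arsinh_pos_iff.mpr (one_div_pos.mpr (sinh_pos_iff.mpr hb))

lemma arsinh_one_div_sinh_involutive :
    Function.Involutive fun b : ℝ ↦ arsinh (1 / sinh b) := fun b ↦ by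
  simp only [sinh_arsinh, one_div_one_div, arsinh_sinh]

lemma cosh_mul_sinh_of_sinh_mul_sinh_eq_one {r b : ℝ} (hb : 0 < b)
    (h : sinh r * sinh b = 1) : cosh r * sinh b = cosh b := by
  have hsq : (cosh r * sinh b) ^ 2 = cosh b ^ 2 := by
    rw [mul_pow, cosh_sq', cosh_sq', add_mul, ← mul_pow, h]; ring
  exact (pow_left_inj₀ (mul_pos (cosh_pos r) (sinh_pos_iff.mpr hb)).le (cosh_pos b).le
    two_ne_zero).mp hsq

lemma lt_of_sinh_mul_sinh_eq_one_of_cosh_eq {b a r l : ℝ} (hb : 0 < b) (hl : 0 < l)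
    (h₁ : sinh r * sinh b = 1) (h₂ : cosh l = (cosh b + exp a) / sinh b) : r < l := by
  have hcr : cosh r = cosh b / sinh b :=
    eq_div_of_mul_eq (sinh_pos_iff.mpr hb).ne' (cosh_mul_sinh_of_sinh_mul_sinh_eq_one hb h₁)
  refine lt_of_cosh_lt_cosh hl.le ?_
  rw [hcr, h₂]
  exact cosh_div_sinh_lt_add_exp_div_sinh hb a

lemma exp_eq_iff_cosh_eq {b a r l : ℝ} (hb : 0 < b) (h : sinh r * sinh b = 1) :
    exp a = (cosh l - cosh r) / sinh r ↔ cosh l = (cosh b + exp a) / sinh b := by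
  have hsb : sinh b ≠ 0 := (sinh_pos_iff.mpr hb).ne'
  rw [eq_div_iff (left_ne_zero_of_mul_eq_one h), eq_div_iff hsb,
    ← cosh_mul_sinh_of_sinh_mul_sinh_eq_one hb h]
  constructor <;> intro h'
  · linear_combination -sinh b * h' + exp a * h
  · linear_combination -sinh r * h' + (cosh l - cosh r) * h

end

/-- For `b > 0` and `a ∈ ℝ`, `(cosh b + exp a)/sinh b > cosh b/sinh b > 1`;
if `r, l > 0` are defined by `sinh r * sinh b = 1` and `cosh l = (cosh b + exp a)/sinh b`,
then `l > r`; and `(b, a) ↦ (r, l)` is a bijection of `(0,∞) × ℝ` onto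
`{(r, l) : 0 < r < l}`. -/
theorem f2_transition_properties :
    (∀ b : ℝ, 0 < b → ∀ a : ℝ,
      (Real.cosh b + Real.exp a) / Real.sinh b > Real.cosh b / Real.sinh b ∧
      Real.cosh b / Real.sinh b > 1) ∧
    (∀ b a r l : ℝ, 0 < b → 0 < r → 0 < l →
      Real.sinh r * Real.sinh b = 1 →
      Real.cosh l = (Real.cosh b + Real.exp a) / Real.sinh b →
      l > r) ∧
    Set.BijOn
      (fun p : ℝ × ℝ =>
        (Real.arsinh (1 / Real.sinh p.1),
         arcosh ((Real.cosh p.1 + Real.exp p.2) / Real.sinh p.1)))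
      (Set.Ioi 0 ×ˢ Set.univ)
      {q : ℝ × ℝ | 0 < q.1 ∧ q.1 < q.2} := by
  refine ⟨fun b hb a ↦ ⟨cosh_div_sinh_lt_add_exp_div_sinh hb a, one_lt_cosh_div_sinh hb⟩,
    fun b a r l hb _ hl h₁ h₂ ↦ lt_of_sinh_mul_sinh_eq_one_of_cosh_eq hb hl h₁ h₂, ?_⟩
  rw [arcosh_eq_real_arcosh]
  refine Set.InvOn.bijOn (f' := fun q : ℝ × ℝ ↦ (Real.arsinh (1 / Real.sinh q.1),
      Real.log ((Real.cosh q.2 - Real.cosh q.1) / Real.sinh q.1))) ⟨?_, ?_⟩ ?_ ?_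
  · rintro ⟨b, a⟩ ⟨hb, -⟩
    have hcosh := Real.cosh_arcosh (one_lt_add_exp_div_sinh hb a).le
    rw [← exp_eq_iff_cosh_eq hb (sinh_arsinh_one_div_sinh_mul_sinh hb)] at hcosh
    simp only [arsinh_one_div_sinh_involutive b, ← hcosh, Real.log_exp]
  · rintro ⟨r, l⟩ ⟨hr, hrl⟩
    have hl : 0 < l := hr.trans hrl
    have hexp : Real.exp (Real.log ((Real.cosh l - Real.cosh r) / Real.sinh r)) =
        (Real.cosh l - Real.cosh r) / Real.sinh r :=
      Real.exp_log (div_pos (sub_pos.mpr (Real.cosh_strictMonoOn hr.le hl.le hrl))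
        (Real.sinh_pos_iff.mpr hr))
    rw [exp_eq_iff_cosh_eq (arsinh_one_div_sinh_pos hr)
      ((mul_comm _ _).trans (sinh_arsinh_one_div_sinh_mul_sinh hr))] at hexp
    simp only [arsinh_one_div_sinh_involutive r, ← hexp, Real.arcosh_cosh hl.le]
  · rintro ⟨b, a⟩ ⟨hb, -⟩
    have hx := one_lt_add_exp_div_sinh hb a
    exact ⟨arsinh_one_div_sinh_pos hb, lt_of_sinh_mul_sinh_eq_one_of_cosh_eq hb
      (Real.arcosh_pos hx) (sinh_arsinh_one_div_sinh_mul_sinh hb) (Real.cosh_arcosh hx.le)⟩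
  · rintro ⟨r, l⟩ ⟨hr, -⟩
    exact ⟨arsinh_one_div_sinh_pos hr, Set.mem_univ _⟩
end

section
/- For every b_u, b_v > 0 and a > 0, define r_u, r_v > 0 by sinh r_u · sinh b_u = 1 and sinh r_v · sinh b_v = 1, and define l > 0 by cosh l = (cosh b_u · cosh b_v + cosh a)/(sinh b_u · sinh b_v) (the right-hand side is > 1, so l exists and is unique). Then l > r_u + r_v, and the map (b_u, b_v, a) ↦ (r_u, r_v, l) is a bijection from (0, ∞)^3 onto { (r_u, r_v, l) ∈ (0, ∞)^3 : l > r_u + r_v }. -/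
/-!
Writing `r = arsinh (1 / sinh b)` gives `sinh r = 1 / sinh b` and `cosh r = cosh b / sinh b`, so
the defining formula for `l` becomes `cosh l = cosh r_u cosh r_v + sinh r_u sinh r_v cosh a`, a
law of cosines with `cosh a > 1` in place of the cosine of an angle. Since
`cosh (r_u + r_v) = cosh r_u cosh r_v + sinh r_u sinh r_v`, this gives `l > r_u + r_v`, and
solving the same formula for `cosh a` inverts the map on `{l > r_u + r_v}`; the substitution
`b ↦ arsinh (1 / sinh b)` is its own inverse.
-/

-- `arcosh` above is definitionally `Real.arcosh`, whose API is used throughout.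
open Real hiding arcosh

open Set

namespace F3Transition

noncomputable def sinhDual (b : ℝ) : ℝ := arsinh (1 / sinh b)

noncomputable def edgeCosh (bu bv a : ℝ) : ℝ :=
  (cosh bu * cosh bv + cosh a) / (sinh bu * sinh bv)

noncomputable def coshLaw (ru rv a : ℝ) : ℝ := cosh ru * cosh rv + sinh ru * sinh rv * cosh a

noncomputable def angleCosh (ru rv l : ℝ) : ℝ :=
  (cosh l - cosh ru * cosh rv) / (sinh ru * sinh rv)

theorem sinhDual_sinhDual (b : ℝ) : sinhDual (sinhDual b) = b := by
  rw [sinhDual, sinhDual, sinh_arsinh, one_div_one_div, arsinh_sinh]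

theorem sinhDual_pos {b : ℝ} (hb : 0 < b) : 0 < sinhDual b :=
  arsinh_pos_iff.2 (one_div_pos.2 (sinh_pos_iff.2 hb))

theorem sinh_sinhDual_mul_sinh {b : ℝ} (hb : b ≠ 0) : sinh (sinhDual b) * sinh b = 1 := by
  rw [sinhDual, sinh_arsinh, one_div_mul_cancel (sinh_ne_zero.2 hb)]

theorem cosh_mul_sinh_of_sinh_mul_sinh_eq_one {r b : ℝ} (hb : 0 < b)
    (h : sinh r * sinh b = 1) : cosh r * sinh b = cosh b := by
  refine (sq_eq_sq₀ (mul_pos (cosh_pos r) (sinh_pos_iff.2 hb)).le (cosh_pos b).le).1 ?_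
  rw [mul_pow, cosh_sq r, cosh_sq b]
  linear_combination (sinh r * sinh b + 1) * h

theorem edgeCosh_eq_coshLaw {bu bv ru rv : ℝ} (hbu : 0 < bu) (hbv : 0 < bv)
    (hu : sinh ru * sinh bu = 1) (hv : sinh rv * sinh bv = 1) (a : ℝ) :
    edgeCosh bu bv a = coshLaw ru rv a := by
  have hsinh : sinh bu * sinh bv ≠ 0 := (mul_pos (sinh_pos_iff.2 hbu) (sinh_pos_iff.2 hbv)).ne'
  rw [edgeCosh, coshLaw, div_eq_iff hsinh]
  linear_combination (-cosh rv * sinh bv) * cosh_mul_sinh_of_sinh_mul_sinh_eq_one hbu hu -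
    cosh bu * cosh_mul_sinh_of_sinh_mul_sinh_eq_one hbv hv -
    (sinh rv * sinh bv * cosh a) * hu - cosh a * hv

theorem angleCosh_eq_iff {ru rv l a : ℝ} (hru : ru ≠ 0) (hrv : rv ≠ 0) :
    angleCosh ru rv l = cosh a ↔ cosh l = coshLaw ru rv a := by
  rw [angleCosh, coshLaw, div_eq_iff (mul_ne_zero (sinh_ne_zero.2 hru) (sinh_ne_zero.2 hrv))]
  constructor <;> intro h <;> linear_combination h

theorem cosh_add_lt_coshLaw {ru rv a : ℝ} (hru : 0 < ru) (hrv : 0 < rv) (ha : a ≠ 0) :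
    cosh (ru + rv) < coshLaw ru rv a := by
  have hsinh : 0 < sinh ru * sinh rv := mul_pos (sinh_pos_iff.2 hru) (sinh_pos_iff.2 hrv)
  rw [cosh_add, coshLaw, mul_assoc (sinh ru)]
  nlinarith [one_lt_cosh.2 ha]

theorem one_lt_edgeCosh {bu bv : ℝ} (hbu : 0 < bu) (hbv : 0 < bv) (a : ℝ) :
    1 < edgeCosh bu bv a := by
  rw [edgeCosh, one_lt_div (mul_pos (sinh_pos_iff.2 hbu) (sinh_pos_iff.2 hbv))]
  linarith [cosh_sub bu bv, one_le_cosh (bu - bv), cosh_pos a]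

theorem one_lt_angleCosh {ru rv l : ℝ} (hru : 0 < ru) (hrv : 0 < rv) (h : ru + rv < l) :
    1 < angleCosh ru rv l := by
  have hcosh : cosh (ru + rv) < cosh l := by
    rwa [cosh_lt_cosh, abs_of_pos (by positivity), abs_of_pos (by linarith)]
  rw [angleCosh, one_lt_div (mul_pos (sinh_pos_iff.2 hru) (sinh_pos_iff.2 hrv))]
  linarith [cosh_add ru rv]

theorem add_lt_of_cosh_eq_edgeCosh {bu bv a ru rv l : ℝ} (hbu : 0 < bu) (hbv : 0 < bv)
    (ha : 0 < a) (hru : 0 < ru) (hrv : 0 < rv) (hl : 0 < l)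
    (hu : sinh ru * sinh bu = 1) (hv : sinh rv * sinh bv = 1) (hcosh : cosh l = edgeCosh bu bv a) :
    ru + rv < l := by
  have hlt : cosh (ru + rv) < cosh l :=
    hcosh ▸ edgeCosh_eq_coshLaw hbu hbv hu hv a ▸ cosh_add_lt_coshLaw hru hrv ha.ne'
  rwa [cosh_lt_cosh, abs_of_pos (by positivity), abs_of_pos hl] at hlt

noncomputable def transition (p : ℝ × ℝ × ℝ) : ℝ × ℝ × ℝ :=
  (sinhDual p.1, sinhDual p.2.1, Real.arcosh (edgeCosh p.1 p.2.1 p.2.2))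

noncomputable def transitionInv (q : ℝ × ℝ × ℝ) : ℝ × ℝ × ℝ :=
  (sinhDual q.1, sinhDual q.2.1, Real.arcosh (angleCosh q.1 q.2.1 q.2.2))

def positiveOctant : Set (ℝ × ℝ × ℝ) := Ioi 0 ×ˢ Ioi 0 ×ˢ Ioi 0

def disjointCircles : Set (ℝ × ℝ × ℝ) :=
  {q | (0 < q.1 ∧ 0 < q.2.1 ∧ 0 < q.2.2) ∧ q.1 + q.2.1 < q.2.2}

theorem mapsTo_transition : MapsTo transition positiveOctant disjointCircles := by
  rintro ⟨bu, bv, a⟩ ⟨hbu : 0 < bu, hbv : 0 < bv, ha : 0 < a⟩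
  have hl := arcosh_pos (one_lt_edgeCosh hbu hbv a)
  refine ⟨⟨sinhDual_pos hbu, sinhDual_pos hbv, hl⟩, ?_⟩
  exact add_lt_of_cosh_eq_edgeCosh hbu hbv ha (sinhDual_pos hbu) (sinhDual_pos hbv) hl
    (sinh_sinhDual_mul_sinh hbu.ne') (sinh_sinhDual_mul_sinh hbv.ne')
    (cosh_arcosh (one_lt_edgeCosh hbu hbv a).le)

theorem mapsTo_transitionInv : MapsTo transitionInv disjointCircles positiveOctant := by
  rintro ⟨ru, rv, l⟩ ⟨⟨hru : 0 < ru, hrv : 0 < rv, -⟩, hlt : ru + rv < l⟩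
  exact ⟨sinhDual_pos hru, sinhDual_pos hrv, arcosh_pos (one_lt_angleCosh hru hrv hlt)⟩

theorem leftInvOn_transitionInv : LeftInvOn transitionInv transition positiveOctant := by
  rintro ⟨bu, bv, a⟩ ⟨hbu : 0 < bu, hbv : 0 < bv, ha : 0 < a⟩
  have hcosh : cosh (Real.arcosh (edgeCosh bu bv a)) = coshLaw (sinhDual bu) (sinhDual bv) a := by
    rw [cosh_arcosh (one_lt_edgeCosh hbu hbv a).le]
    exact edgeCosh_eq_coshLaw hbu hbv (sinh_sinhDual_mul_sinh hbu.ne')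
      (sinh_sinhDual_mul_sinh hbv.ne') a
  simp only [transition, transitionInv, sinhDual_sinhDual,
    (angleCosh_eq_iff (sinhDual_pos hbu).ne' (sinhDual_pos hbv).ne').2 hcosh,
    arcosh_cosh ha.le]

theorem rightInvOn_transitionInv : RightInvOn transitionInv transition disjointCircles := by
  rintro ⟨ru, rv, l⟩ ⟨⟨hru : 0 < ru, hrv : 0 < rv, hl : 0 < l⟩, hlt : ru + rv < l⟩
  have hbu := sinhDual_pos hru
  have hbv := sinhDual_pos hrv
  have hu : sinh ru * sinh (sinhDual ru) = 1 := by
    simpa only [sinhDual_sinhDual] using sinh_sinhDual_mul_sinh hbu.ne'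
  have hv : sinh rv * sinh (sinhDual rv) = 1 := by
    simpa only [sinhDual_sinhDual] using sinh_sinhDual_mul_sinh hbv.ne'
  have hcosh : edgeCosh (sinhDual ru) (sinhDual rv) (Real.arcosh (angleCosh ru rv l)) = cosh l := by
    rw [edgeCosh_eq_coshLaw hbu hbv hu hv]
    exact ((angleCosh_eq_iff hru.ne' hrv.ne').1
      (cosh_arcosh (one_lt_angleCosh hru hrv hlt).le).symm).symm
  simp only [transition, transitionInv, sinhDual_sinhDual, hcosh, arcosh_cosh hl.le]

end F3Transition

open F3Transition

/-- For `b_u, b_v, a > 0`, the quantity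
`(cosh b_u cosh b_v + cosh a)/(sinh b_u sinh b_v)` is `> 1` (so `l > 0` with `cosh l`
equal to it exists uniquely); with `r_u, r_v` defined by `sinh r * sinh b = 1` one has
`l > r_u + r_v`; and `(b_u, b_v, a) ↦ (r_u, r_v, l)` is a bijection from `(0,∞)³` onto
`{(r_u, r_v, l) ∈ (0,∞)³ : l > r_u + r_v}`. -/
theorem f3_transition_properties :
    (∀ bu bv a : ℝ, 0 < bu → 0 < bv → 0 < a →
      1 < (Real.cosh bu * Real.cosh bv + Real.cosh a) /
            (Real.sinh bu * Real.sinh bv) ∧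
      ∃! l : ℝ, 0 < l ∧
        Real.cosh l = (Real.cosh bu * Real.cosh bv + Real.cosh a) /
          (Real.sinh bu * Real.sinh bv)) ∧
    (∀ bu bv a ru rv l : ℝ, 0 < bu → 0 < bv → 0 < a → 0 < ru → 0 < rv → 0 < l →
      Real.sinh ru * Real.sinh bu = 1 → Real.sinh rv * Real.sinh bv = 1 →
      Real.cosh l = (Real.cosh bu * Real.cosh bv + Real.cosh a) /
        (Real.sinh bu * Real.sinh bv) →
      l > ru + rv) ∧
    Set.BijOn
      (fun p : ℝ × ℝ × ℝ =>
        (Real.arsinh (1 / Real.sinh p.1),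
         Real.arsinh (1 / Real.sinh p.2.1),
         arcosh ((Real.cosh p.1 * Real.cosh p.2.1 + Real.cosh p.2.2) /
           (Real.sinh p.1 * Real.sinh p.2.1))))
      (Set.Ioi 0 ×ˢ Set.Ioi 0 ×ˢ Set.Ioi 0)
      {q : ℝ × ℝ × ℝ | (0 < q.1 ∧ 0 < q.2.1 ∧ 0 < q.2.2) ∧ q.1 + q.2.1 < q.2.2} := by
  refine ⟨fun bu bv a hbu hbv _ => ?_, fun bu bv a ru rv l => add_lt_of_cosh_eq_edgeCosh, ?_⟩
  · have hX := one_lt_edgeCosh hbu hbv a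
    refine ⟨hX, Real.arcosh (edgeCosh bu bv a), ⟨arcosh_pos hX, cosh_arcosh hX.le⟩, ?_⟩
    rintro l ⟨hl, hcosh⟩
    exact (arcosh_cosh hl.le).symm.trans (congrArg Real.arcosh hcosh)
  · exact InvOn.bijOn ⟨leftInvOn_transitionInv, rightInvOn_transitionInv⟩
      mapsTo_transition mapsTo_transitionInv
end

section
/- Let a, b, c > 0. Then the three strict triangle inequalities a < b + c, b < c + a, c < a + b hold simultaneously if and only if |cosh a · cosh b − cosh c| < sinh a · sinh b; equivalently, cosh a · cosh b − sinh a · sinh b < cosh c < cosh a · cosh b + sinh a · sinh b. -/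
/-! Rewriting `cosh a cosh b ∓ sinh a sinh b` as `cosh (a ∓ b)`, the claim becomes
`cosh |a - b| < cosh c < cosh (a + b)`, and since `cosh` is strictly increasing on `[0, ∞)` this
is `|a - b| < c < a + b`, which is the conjunction of the three triangle inequalities. -/

open Real

theorem triangle_ineqs_iff_abs_sub_lt_and_lt_add {α : Type*}
    [AddCommGroup α] [LinearOrder α] [IsOrderedAddMonoid α] {a b c : α} :
    (a < b + c ∧ b < c + a ∧ c < a + b) ↔ |a - b| < c ∧ c < a + b := by
  rw [abs_sub_lt_iff, sub_lt_iff_lt_add', sub_lt_iff_lt_add', add_comm c a, and_assoc]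

theorem abs_sub_lt_iff_sub_lt_and_lt_add {α : Type*}
    [AddCommGroup α] [LinearOrder α] [IsOrderedAddMonoid α] {x y z : α} :
    |x - y| < z ↔ x - z < y ∧ y < x + z := by
  rw [abs_sub_lt_iff, sub_lt_comm, sub_lt_iff_lt_add' (a := y)]

theorem triangle_ineqs_iff_cosh_sub_lt_and_lt_cosh_add {a b c : ℝ} (hab : 0 < a + b)
    (hc : 0 < c) :
    (a < b + c ∧ b < c + a ∧ c < a + b) ↔ cosh (a - b) < cosh c ∧ cosh c < cosh (a + b) := by
  rw [triangle_ineqs_iff_abs_sub_lt_and_lt_add, cosh_lt_cosh, cosh_lt_cosh, abs_of_pos hc,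
    abs_of_pos hab]

/-- For `a, b, c > 0` the three strict triangle inequalities hold iff
`|cosh a * cosh b - cosh c| < sinh a * sinh b`, equivalently iff
`cosh a cosh b - sinh a sinh b < cosh c < cosh a cosh b + sinh a sinh b`. -/
theorem triangle_ineq_iff_cosh
    (a b c : ℝ) (ha : 0 < a) (hb : 0 < b) (hc : 0 < c) :
    ((a < b + c ∧ b < c + a ∧ c < a + b) ↔
      |Real.cosh a * Real.cosh b - Real.cosh c| < Real.sinh a * Real.sinh b) ∧
    ((a < b + c ∧ b < c + a ∧ c < a + b) ↔
      (Real.cosh a * Real.cosh b - Real.sinh a * Real.sinh b < Real.cosh c ∧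
       Real.cosh c < Real.cosh a * Real.cosh b + Real.sinh a * Real.sinh b)) := by
  have hcosh : (a < b + c ∧ b < c + a ∧ c < a + b) ↔
      (cosh a * cosh b - sinh a * sinh b < cosh c ∧
        cosh c < cosh a * cosh b + sinh a * sinh b) := by
    rw [← cosh_sub, ← cosh_add]
    exact triangle_ineqs_iff_cosh_sub_lt_and_lt_cosh_add (add_pos ha hb) hc
  exact ⟨hcosh.trans abs_sub_lt_iff_sub_lt_and_lt_add.symm, hcosh⟩
end

section
/- Define g : (0, ∞)^3 → ℝ by g(a, b, c) = arccos((cosh a · cosh b − cosh c)/(sinh a · sinh b)), where arccos is the real arccosine extended by the constant values π on (−∞, −1] and 0 on [1, ∞). Then g is continuous on (0, ∞)^3; g(a, b, c) = π if and only if c ≥ a + b; g(a, b, c) = 0 if and only if c ≤ |a − b|; and 0 < g(a, b, c) < π if and only if a, b, c satisfy the three strict triangle inequalities a < b + c, b < c + a, c < a + b. -/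
/-!
Clearing the positive denominator `sinh a * sinh b` and using the addition formulas
`cosh (a ± b) = cosh a * cosh b ± sinh a * sinh b`, the cosine argument is `≤ -1` exactly when
`cosh (a + b) ≤ cosh c` and `≥ 1` exactly when `cosh c ≤ cosh (a - b)`. Since `cosh` is even and
strictly increasing on `[0, ∞)`, these say `a + b ≤ c` and `c ≤ |a - b|`, which is where the
extended `arccos` takes the values `π` and `0`; the open case is what remains.
-/

/-- The hyperbolic law-of-cosines angle function (with `Real.arccos` extended by `π`
on `(-∞,-1]` and `0` on `[1,∞)`). -/
noncomputable def hypAngle (a b c : ℝ) : ℝ :=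
  Real.arccos ((Real.cosh a * Real.cosh b - Real.cosh c) / (Real.sinh a * Real.sinh b))

open Real

noncomputable def hypCosArg (a b c : ℝ) : ℝ :=
  (cosh a * cosh b - cosh c) / (sinh a * sinh b)

theorem hypAngle_eq_arccos (a b c : ℝ) : hypAngle a b c = arccos (hypCosArg a b c) := rfl

theorem sinh_mul_sinh_pos {a b : ℝ} (ha : 0 < a) (hb : 0 < b) : 0 < sinh a * sinh b :=
  mul_pos (sinh_pos_iff.mpr ha) (sinh_pos_iff.mpr hb)

section

variable {a b : ℝ}

theorem hypCosArg_le_neg_one_iff (ha : 0 < a) (hb : 0 < b) (c : ℝ) :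
    hypCosArg a b c ≤ -1 ↔ a + b ≤ |c| := by
  rw [hypCosArg, div_le_iff₀ (sinh_mul_sinh_pos ha hb), ← abs_of_pos (add_pos ha hb),
    ← cosh_le_cosh, cosh_add]
  constructor <;> intro h <;> linarith

theorem one_le_hypCosArg_iff (ha : 0 < a) (hb : 0 < b) (c : ℝ) :
    1 ≤ hypCosArg a b c ↔ |c| ≤ |a - b| := by
  rw [hypCosArg, le_div_iff₀ (sinh_mul_sinh_pos ha hb), ← cosh_le_cosh, cosh_sub]
  constructor <;> intro h <;> linarith

theorem hypAngle_eq_pi_iff (ha : 0 < a) (hb : 0 < b) (c : ℝ) :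
    hypAngle a b c = π ↔ a + b ≤ |c| := by
  rw [hypAngle_eq_arccos, arccos_eq_pi, hypCosArg_le_neg_one_iff ha hb]

theorem hypAngle_eq_zero_iff (ha : 0 < a) (hb : 0 < b) (c : ℝ) :
    hypAngle a b c = 0 ↔ |c| ≤ |a - b| := by
  rw [hypAngle_eq_arccos, arccos_eq_zero, one_le_hypCosArg_iff ha hb]

theorem hypAngle_pos_and_lt_pi_iff (ha : 0 < a) (hb : 0 < b) {c : ℝ} (hc : 0 < c) :
    (0 < hypAngle a b c ∧ hypAngle a b c < π) ↔ (a < b + c ∧ b < c + a ∧ c < a + b) := by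
  have h_nonneg : 0 ≤ hypAngle a b c := arccos_nonneg _
  have h_le_pi : hypAngle a b c ≤ π := arccos_le_pi _
  rw [h_nonneg.lt_iff_ne', h_le_pi.lt_iff_ne, Ne, Ne, hypAngle_eq_zero_iff ha hb,
    hypAngle_eq_pi_iff ha hb, abs_of_pos hc, not_le, not_le, abs_lt]
  constructor
  · rintro ⟨⟨h₁, h₂⟩, h₃⟩
    exact ⟨by linarith, by linarith, h₃⟩
  · rintro ⟨h₁, h₂, h₃⟩
    exact ⟨⟨by linarith, by linarith⟩, h₃⟩

end

theorem continuousOn_hypAngle :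
    ContinuousOn (fun p : ℝ × ℝ × ℝ => hypAngle p.1 p.2.1 p.2.2)
      {p : ℝ × ℝ × ℝ | 0 < p.1 ∧ 0 < p.2.1} := by
  refine continuous_arccos.comp_continuousOn (ContinuousOn.div (by fun_prop) (by fun_prop) ?_)
  rintro p ⟨h₁, h₂⟩
  exact (sinh_mul_sinh_pos h₁ h₂).ne'

/-- `g` is continuous on `(0,∞)³`; `g = π` iff `c ≥ a + b`; `g = 0` iff
`c ≤ |a - b|`; and `0 < g < π` iff the strict triangle inequalities hold. -/
theorem hypAngle_properties :
    ContinuousOn (fun p : ℝ × ℝ × ℝ => hypAngle p.1 p.2.1 p.2.2)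
      {p : ℝ × ℝ × ℝ | 0 < p.1 ∧ 0 < p.2.1 ∧ 0 < p.2.2} ∧
    ∀ a b c : ℝ, 0 < a → 0 < b → 0 < c →
      ((hypAngle a b c = Real.pi ↔ a + b ≤ c) ∧
       (hypAngle a b c = 0 ↔ c ≤ |a - b|) ∧
       ((0 < hypAngle a b c ∧ hypAngle a b c < Real.pi) ↔
         (a < b + c ∧ b < c + a ∧ c < a + b))) := by
  refine ⟨continuousOn_hypAngle.mono fun p hp => ⟨hp.1, hp.2.1⟩, fun a b c ha hb hc => ?_⟩
  rw [hypAngle_eq_pi_iff ha hb, hypAngle_eq_zero_iff ha hb, abs_of_pos hc]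
  exact ⟨Iff.rfl, Iff.rfl, hypAngle_pos_and_lt_pi_iff ha hb hc⟩
end

section
/- The function g(a, b, c) = arccos((cosh a · cosh b − cosh c)/(sinh a · sinh b)) is real-analytic on the open set { (a, b, c) ∈ (0, ∞)^3 : |a − b| < c < a + b } of positive triples satisfying the strict triangle inequalities. -/
/-!
Since `cosh` is even and strictly increasing on `[0, ∞)`, the strict triangle inequalities
`|a - b| < c < a + b` say `cosh (a - b) < cosh c < cosh (a + b)`; expanding `cosh (a ∓ b)` this is
exactly `-1 < (cosh a cosh b - cosh c) / (sinh a sinh b) < 1`. The quotient is analytic where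
`sinh a sinh b ≠ 0`, and `arccos` is `C^ω`, hence analytic, away from `±1`.
-/

open Real
open scoped ContDiff

theorem cosh_mul_cosh_sub_cosh_div_sinh_mul_sinh_mem_Ioo {a b c : ℝ} (ha : 0 < a) (hb : 0 < b)
    (hlow : |a - b| < c) (hhigh : c < a + b) :
    (cosh a * cosh b - cosh c) / (sinh a * sinh b) ∈ Set.Ioo (-1) 1 := by
  have hc : 0 < c := (abs_nonneg _).trans_lt hlow
  have hsinh : 0 < sinh a * sinh b := mul_pos (sinh_pos_iff.2 ha) (sinh_pos_iff.2 hb)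
  have hlow' : cosh (a - b) < cosh c := by rwa [cosh_lt_cosh, abs_of_pos hc]
  have hhigh' : cosh c < cosh (a + b) := by
    rwa [cosh_lt_cosh, abs_of_pos hc, abs_of_pos (add_pos ha hb)]
  rw [cosh_sub] at hlow'
  rw [cosh_add] at hhigh'
  constructor
  · rw [lt_div_iff₀ hsinh]; linarith
  · rw [div_lt_one hsinh]; linarith

/-- The hyperbolic law-of-cosines angle function is real-analytic on the
open set of positive triples satisfying the strict triangle inequalities. -/
theorem hypAngle_analyticOn :
    AnalyticOn ℝ
      (fun p : ℝ × ℝ × ℝ =>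
        Real.arccos ((Real.cosh p.1 * Real.cosh p.2.1 - Real.cosh p.2.2) /
          (Real.sinh p.1 * Real.sinh p.2.1)))
      {p : ℝ × ℝ × ℝ | 0 < p.1 ∧ 0 < p.2.1 ∧ 0 < p.2.2 ∧
        |p.1 - p.2.1| < p.2.2 ∧ p.2.2 < p.1 + p.2.1} := by
  refine AnalyticOnNhd.analyticOn fun ⟨a, b, c⟩ ⟨ha, hb, _, hlow, hhigh⟩ => ?_
  obtain ⟨h₁, h₂⟩ := cosh_mul_cosh_sub_cosh_div_sinh_mul_sinh_mem_Ioo ha hb hlow hhigh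
  have hsinh : sinh a * sinh b ≠ 0 := (mul_pos (sinh_pos_iff.2 ha) (sinh_pos_iff.2 hb)).ne'
  have hquot : ContDiffAt ℝ ω (fun p : ℝ × ℝ × ℝ =>
      (cosh p.1 * cosh p.2.1 - cosh p.2.2) / (sinh p.1 * sinh p.2.1)) (a, b, c) := by
    fun_prop (disch := exact hsinh)
  exact ((contDiffAt_arccos h₁.ne' h₂.ne).comp (a, b, c) hquot).analyticAt
end
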